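/- arXiv:1604.04976 — 4 statements merged into one kernel-verified Lean document; each statement's English description precedes it below -/
import Mathlib

section
/- Let ω be a non-constant analytic function on the open unit disk D with ω(0)=0. If for some 0<r<1 the maximum of |ω(z)| on the circle |z|=r is attained at a point z₀ with |z₀|=r, then z₀·ω'(z₀) = k·ω(z₀) for some real k ≥ 1. -/
/-!
Write `M = ‖ω z₀‖`, which is positive since `ω` is not constant. On the circle `‖z‖ = r` the
function `‖ω‖²` is maximal at `z₀`, so its tangential derivative there vanishes:
`Im (conj (ω z₀) * z₀ ω'(z₀)) = 0`. By the Schwarz lemma `‖ω (t z₀)‖ ≤ t M` for `0 < t < 1`, so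
`‖ω (t z₀)‖² - t² M²` attains its maximum over `t ≤ 1` at `t = 1` and has nonnegative derivative
there: `Re (conj (ω z₀) * z₀ ω'(z₀)) ≥ M²`. Hence `z₀ ω'(z₀) / ω z₀` is real and at least `1`.
-/

open Complex ComplexConjugate Metric Set

theorem IsLocalMaxOn.hasDerivAt_nonneg_of_Iic {f : ℝ → ℝ} {f' a : ℝ}
    (h : IsLocalMaxOn f (Iic a) a) (hf : HasDerivAt f f' a) : 0 ≤ f' := by
  have hcone : (-1 : ℝ) ∈ posTangentConeAt (Iic a) a :=
    mem_posTangentConeAt_of_segment_subset <| by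
      rw [segment_symm, segment_eq_Icc (by linarith)]
      exact Icc_subset_Iic_self
  simpa using h.hasFDerivWithinAt_nonpos hf.hasFDerivAt.hasFDerivWithinAt hcone

namespace Complex

theorem hasDerivAt_norm_sq_comp {g : ℂ → ℂ} {γ : ℝ → ℂ} {t : ℝ} {v : ℂ}
    (hg : DifferentiableAt ℂ g (γ t)) (hγ : HasDerivAt γ v t) :
    HasDerivAt (fun s => ‖g (γ s)‖ ^ 2) (2 * (conj (g (γ t)) * (v * deriv g (γ t))).re) t := by
  have := (hg.hasDerivAt.comp t hγ).norm_sq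
  simpa [Complex.inner, mul_comm, mul_left_comm] using this

theorem im_conj_mul_deriv_eq_zero_of_forall_norm_eq {g : ℂ → ℂ} {z : ℂ}
    (hg : DifferentiableAt ℂ g z) (hmax : ∀ w, ‖w‖ = ‖z‖ → ‖g w‖ ≤ ‖g z‖) :
    (conj (g z) * (z * deriv g z)).im = 0 := by
  set γ : ℝ → ℂ := fun t => z * exp (t * I)
  have hγ0 : γ 0 = z := by simp [γ]
  have hγ : HasDerivAt γ (z * I) 0 := by
    simpa [γ] using (((hasDerivAt_id (0 : ℝ)).ofReal_comp.mul_const I).cexp).const_mul z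
  have hmax_γ : IsLocalMax (fun t => ‖g (γ t)‖ ^ 2) 0 :=
    Filter.Eventually.of_forall fun t => by
      refine pow_le_pow_left₀ (norm_nonneg _) ?_ 2
      rw [hγ0]
      exact hmax _ (by simp [γ, norm_exp_ofReal_mul_I])
  have := hmax_γ.hasDerivAt_eq_zero (hasDerivAt_norm_sq_comp (hγ0 ▸ hg) hγ)
  rw [hγ0, show conj (g z) * (z * I * deriv g z) = conj (g z) * (z * deriv g z) * I by ring,
    mul_I_re] at this
  linarith

theorem norm_sq_le_re_conj_mul_deriv_of_norm_le_mul {g : ℂ → ℂ} {z : ℂ}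
    (hg : DifferentiableAt ℂ g z) (hrad : ∀ t ∈ Ioo (0 : ℝ) 1, ‖g (t * z)‖ ≤ t * ‖g z‖) :
    ‖g z‖ ^ 2 ≤ (conj (g z) * (z * deriv g z)).re := by
  set F : ℝ → ℝ := fun t => ‖g (t * z)‖ ^ 2 - t ^ 2 * ‖g z‖ ^ 2
  have hγ : HasDerivAt (fun t : ℝ => (t : ℂ) * z) z 1 := by
    simpa using (hasDerivAt_id (1 : ℝ)).ofReal_comp.mul_const z
  have hF : HasDerivAt F (2 * (conj (g z) * (z * deriv g z)).re - 2 * ‖g z‖ ^ 2) 1 := by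
    have := (hasDerivAt_norm_sq_comp (by simpa using hg) hγ).fun_sub
      ((hasDerivAt_pow 2 (1 : ℝ)).mul_const (‖g z‖ ^ 2))
    simpa using this
  have hmaxF : IsLocalMaxOn F (Iic 1) 1 := by
    filter_upwards [Ioc_mem_nhdsLE (zero_lt_one' ℝ)] with t ht
    rcases ht.2.lt_or_eq with ht1 | rfl
    · have := pow_le_pow_left₀ (norm_nonneg _) (hrad t ⟨ht.1, ht1⟩) 2
      simp only [F, ofReal_one, one_mul, one_pow]
      nlinarith
    · exact le_rfl
  linarith [hmaxF.hasDerivAt_nonneg_of_Iic hF]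

theorem exists_one_le_eq_ofReal_mul_of_conj_mul {w a : ℂ} (hw : w ≠ 0)
    (him : (conj w * a).im = 0) (hre : ‖w‖ ^ 2 ≤ (conj w * a).re) :
    ∃ k : ℝ, 1 ≤ k ∧ a = k * w := by
  have hw2 : 0 < ‖w‖ ^ 2 := by positivity
  refine ⟨(conj w * a).re / ‖w‖ ^ 2, (one_le_div hw2).2 hre, ?_⟩
  apply mul_left_cancel₀ ((map_ne_zero conj).2 hw)
  have hw' : (‖w‖ : ℂ) ≠ 0 := by simpa using hw
  calc conj w * a = ((conj w * a).re : ℂ) := by apply ext <;> simp [him]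
    _ = conj w * (((conj w * a).re / ‖w‖ ^ 2 : ℝ) * w) := by
      rw [mul_left_comm, conj_mul']
      push_cast
      field_simp

end Complex

/-- Jack's lemma. -/
theorem jack_lemma (ω : ℂ → ℂ) (hω : AnalyticOn ℂ ω (ball (0:ℂ) 1))
    (hnc : ¬ ∃ c : ℂ, Set.EqOn ω (fun _ => c) (ball (0:ℂ) 1))
    (h0 : ω 0 = 0) (r : ℝ) (hr : 0 < r) (hr1 : r < 1)
    (z₀ : ℂ) (hz₀ : ‖z₀‖ = r)
    (hmax : ∀ z : ℂ, ‖z‖ ≤ r → ‖ω z‖ ≤ ‖ω z₀‖) :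
    ∃ k : ℝ, 1 ≤ k ∧ z₀ * deriv ω z₀ = (k : ℂ) * ω z₀ := by
  have hω' : AnalyticOnNhd ℂ ω (ball 0 1) := isOpen_ball.analyticOn_iff_analyticOnNhd.1 hω
  have hωz₀ : ω z₀ ≠ 0 := by
    intro hzero
    refine hnc ⟨0, hω'.eqOn_zero_of_preconnected_of_eventuallyEq_zero
      (convex_ball 0 1).isPreconnected (mem_ball_self one_pos) ?_⟩
    filter_upwards [ball_mem_nhds (0 : ℂ) hr] with z hz'
    simpa [hzero] using hmax z (mem_ball_zero_iff.1 hz').le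
  have hschwarz : ∀ z ∈ ball (0 : ℂ) r, ‖ω z‖ ≤ ‖ω z₀‖ / r * ‖z‖ := fun z hz => by
    simpa [h0] using dist_le_div_mul_dist_of_mapsTo_ball
      (hω.differentiableOn.mono (ball_subset_ball hr1.le))
      (fun w hw => by simpa [h0] using hmax w (mem_ball_zero_iff.1 hw).le) hz
  have hd : DifferentiableAt ℂ ω z₀ := (hω' z₀ (by simpa [hz₀] using hr1)).differentiableAt
  refine exists_one_le_eq_ofReal_mul_of_conj_mul hωz₀
    (im_conj_mul_deriv_eq_zero_of_forall_norm_eq hd fun w hw => hmax w (hw.trans hz₀).le)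
    (norm_sq_le_re_conj_mul_deriv_of_norm_le_mul hd fun t ht => ?_)
  have htz : ‖(t : ℂ) * z₀‖ = t * r := by simp [hz₀, abs_of_pos ht.1]
  calc ‖ω (t * z₀)‖ ≤ ‖ω z₀‖ / r * (t * r) :=
        htz ▸ hschwarz _ (mem_ball_zero_iff.2 (by nlinarith [ht.2]))
    _ = t * ‖ω z₀‖ := by field_simp
end

section
/- Let g(z) = (1-z)^{is} = exp(is·Log(1-z)) for a nonzero real s, defined on the unit disk D using the principal branch of logarithm. Then the cluster set of g at the point z = 1, defined as C₁(g) = ⋂_{0<δ<1} closure(g(D ∩ D(1,δ))), equals the closed annulus {w ∈ ℂ : e^{-π|s|/2} ≤ |w| ≤ e^{π|s|/2}}. -/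
/-!
For `‖z‖ < 1` the point `1 - z` lies in the right half-plane, so `|arg (1 - z)| ≤ π/2` and
`‖(1 - z)^{is}‖ = e^{-s arg (1 - z)}` lies in the closed annulus; that set is closed, so it contains
the cluster set.
Conversely, write `1 - z = e^c`, so that `(1 - z)^{is} = e^{isc}` as long as `|Im c| < π`. A point `w`
of the open annulus is hit by any `c` with `Im c = -log ‖w‖ / s` (which has `|Im c| < π/2`) and
`s Re c ≡ arg w (mod 2π)`; the second condition allows `Re c → -∞`, i.e. `z → 1`, while `z` stays
in the disc. Hence every neighbourhood of `1` maps onto the open annulus, whose closure is the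
closed annulus.
-/

open Complex Metric Real Set

lemma norm_exp_I_mul_ofReal_mul_log (s : ℝ) (u : ℂ) :
    ‖exp (I * s * log u)‖ = Real.exp (-(s * arg u)) := by
  simp [norm_exp, mul_re, mul_im, log_im]

lemma abs_arg_one_sub_le_pi_div_two {z : ℂ} (hz : ‖z‖ < 1) : |arg (1 - z)| ≤ π / 2 := by
  rw [abs_arg_le_pi_div_two_iff, sub_re, one_re, sub_nonneg]
  exact (re_le_norm z).trans hz.le

lemma exp_neg_mul_mem_Icc {s θ : ℝ} (hθ : |θ| ≤ π / 2) :
    Real.exp (-(s * θ)) ∈ Icc (Real.exp (-(π * |s|) / 2)) (Real.exp (π * |s| / 2)) := by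
  have h : |s * θ| ≤ π * |s| / 2 := by
    rw [abs_mul]; nlinarith [abs_nonneg s]
  rw [abs_le] at h
  exact ⟨Real.exp_le_exp.2 (by linarith), Real.exp_le_exp.2 (by linarith)⟩

lemma norm_one_sub_exp_lt_one_iff (c : ℂ) :
    ‖1 - exp c‖ < 1 ↔ Real.exp c.re < 2 * Real.cos c.im := by
  have hsq : ‖1 - exp c‖ ^ 2 = 1 - 2 * Real.exp c.re * Real.cos c.im + Real.exp c.re ^ 2 := by
    rw [Complex.sq_norm, normSq_apply]
    simp only [sub_re, sub_im, one_re, one_im, exp_re, exp_im]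
    nlinarith [Real.sin_sq_add_cos_sq c.im]
  have ht := Real.exp_pos c.re
  rw [← sq_lt_one_iff₀ (norm_nonneg _), hsq]
  constructor <;> intro h <;> nlinarith

lemma exists_add_int_mul_lt {c : ℝ} (hc : c ≠ 0) (a L : ℝ) : ∃ n : ℤ, a + n * c < L := by
  rcases hc.lt_or_gt with hc | hc
  · obtain ⟨n, hn⟩ := exists_int_gt ((L - a) / c)
    exact ⟨n, by rw [div_lt_iff_of_neg hc] at hn; linarith⟩
  · obtain ⟨n, hn⟩ := exists_int_lt ((L - a) / c)
    exact ⟨n, by rw [lt_div_iff₀ hc] at hn; linarith⟩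

lemma exists_re_lt_exp_I_mul_eq {s : ℝ} (hs : s ≠ 0) {w : ℂ} (hw : w ≠ 0) (L : ℝ) :
    ∃ c : ℂ, c.im = -Real.log ‖w‖ / s ∧ c.re < L ∧ exp (I * s * c) = w := by
  obtain ⟨n, hn⟩ := exists_add_int_mul_lt (div_ne_zero two_pi_pos.ne' hs) (arg w / s) L
  refine ⟨⟨arg w / s + n * (2 * π / s), -Real.log ‖w‖ / s⟩, rfl, hn, ?_⟩
  have hexponent : I * s * ⟨arg w / s + n * (2 * π / s), -Real.log ‖w‖ / s⟩ = log w + n * (2 * π * I) := by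
    apply Complex.ext <;> simp [log_re, log_im] <;> field_simp
  rw [hexponent, Complex.exp_add, exp_log hw, exp_int_mul_two_pi_mul_I, mul_one]

lemma subset_closure_setOf_norm_mem_Ioo {E : Type*} [NormedAddCommGroup E] [NormedSpace ℝ E]
    {a b : ℝ} (ha : 0 < a) (hab : a < b) :
    {w : E | ‖w‖ ∈ Icc a b} ⊆ closure {w | ‖w‖ ∈ Ioo a b} := by
  intro w hw
  have hw0 : ‖w‖ ≠ 0 := (ha.trans_le hw.1).ne'
  have hmaps : MapsTo (fun ρ : ℝ => (ρ / ‖w‖) • w) (Ioo a b) {w | ‖w‖ ∈ Ioo a b} := by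
    intro ρ hρ
    simpa [norm_smul, abs_of_pos (ha.trans hρ.1), hw0] using hρ
  have h := map_mem_closure (by fun_prop) (closure_Ioo hab.ne ▸ hw) hmaps
  rwa [div_self hw0, one_smul] at h

lemma exists_mem_ball_exp_I_mul_log_one_sub_eq {s : ℝ} (hs : s ≠ 0) {δ : ℝ} (hδ : 0 < δ) {w : ℂ}
    (hw : ‖w‖ ∈ Ioo (Real.exp (-(π * |s|) / 2)) (Real.exp (π * |s| / 2))) :
    ∃ z ∈ ball (0 : ℂ) 1 ∩ ball 1 δ, exp (I * s * log (1 - z)) = w := by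
  have hw0 : 0 < ‖w‖ := (Real.exp_pos _).trans hw.1
  set φ := -Real.log ‖w‖ / s
  have hφ : |φ| < π / 2 := by
    have h : |Real.log ‖w‖| < π * |s| / 2 := by
      rw [abs_lt, ← neg_div, Real.lt_log_iff_exp_lt hw0, Real.log_lt_iff_lt_exp hw0]
      exact hw
    rw [abs_div, abs_neg, div_lt_iff₀ (abs_pos.2 hs)]
    linarith
  have hcos : 0 < Real.cos φ := Real.cos_pos_of_mem_Ioo (abs_lt.1 hφ)
  obtain ⟨c, hcim, hcre, hc⟩ :=
    exists_re_lt_exp_I_mul_eq hs (norm_pos_iff.1 hw0) (Real.log (min δ (2 * Real.cos φ)))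
  rw [Real.lt_log_iff_exp_lt (by positivity), lt_min_iff] at hcre
  rw [← show c.im = φ from hcim] at hcre hφ
  have hφπ := abs_lt.1 hφ
  refine ⟨1 - exp c, ⟨?_, ?_⟩, ?_⟩
  · rw [mem_ball_zero_iff, norm_one_sub_exp_lt_one_iff]
    exact hcre.2
  · rw [mem_ball, Complex.dist_eq, sub_sub_cancel_left, norm_neg, norm_exp]
    exact hcre.1
  · rwa [sub_sub_cancel, log_exp (by linarith [pi_pos]) (by linarith [pi_pos])]

/-- The cluster set of `(1-z)^{is}` at `z = 1` is the closed annulus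
`e^{-π|s|/2} ≤ |w| ≤ e^{π|s|/2}`. -/
theorem clusterSet_one_sub_pow_I_mul (s : ℝ) (hs : s ≠ 0)
    (g : ℂ → ℂ) (hg : ∀ z : ℂ, g z = Complex.exp (Complex.I * s * Complex.log (1 - z))) :
    (⋂ δ ∈ Ioo (0:ℝ) 1, closure (g '' (ball (0:ℂ) 1 ∩ ball (1:ℂ) δ))) =
      {w : ℂ | Real.exp (-(π * |s|) / 2) ≤ ‖w‖ ∧
               ‖w‖ ≤ Real.exp (π * |s| / 2)} := by
  have hab : Real.exp (-(π * |s|) / 2) < Real.exp (π * |s| / 2) := by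
    have := mul_pos pi_pos (abs_pos.2 hs)
    exact Real.exp_lt_exp.2 (by linarith)
  apply Subset.antisymm
  · have hclosed :
        IsClosed {w : ℂ | ‖w‖ ∈ Icc (Real.exp (-(π * |s|) / 2)) (Real.exp (π * |s| / 2))} :=
      isClosed_Icc.preimage continuous_norm
    refine (iInter₂_subset (1 / 2) (by norm_num)).trans (closure_minimal ?_ hclosed)
    rintro _ ⟨z, ⟨hz, -⟩, rfl⟩
    rw [mem_ofPred_eq, hg, norm_exp_I_mul_ofReal_mul_log]
    exact exp_neg_mul_mem_Icc (abs_arg_one_sub_le_pi_div_two (mem_ball_zero_iff.1 hz))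
  · refine subset_iInter₂ fun δ hδ => ?_
    refine (subset_closure_setOf_norm_mem_Ioo (Real.exp_pos _) hab).trans (closure_mono ?_)
    intro w hw
    obtain ⟨z, hz, rfl⟩ := exists_mem_ball_exp_I_mul_log_one_sub_eq hs hδ.1 hw
    exact ⟨z, hz, hg z⟩
end

section
/- Fix λ ∈ (-π/2, π/2), set μ = e^{iλ} cos λ, and let a, b, c ∈ ℂ. For s ∈ ℝ put σ = μ(is - 1), A = σ(σ + c - 1), B = (σ + a)(σ + b). Then Re[(B - A)·conj(μ)] = cos²λ · Re[(is-1)(a+b+1-c)] + Re[a b e^{-iλ}] cos λ. In particular, if Re[(B-A)·conj(μ)] > 0 for all s ∈ ℝ, then Im(a+b+1-c) = 0 and Re[e^{-iλ}(ab - (a+b+1-c))] > 0. -/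
open Complex Real

open scoped ComplexConjugate

/-! Since `B - A = σ (a + b + 1 - c) + a b` and `σ conj μ = |μ|² (i s - 1)` with `|μ|² = cos² λ`,
the quantity `Re[(B - A) conj μ]` is an affine function of `s` with slope
`-cos² λ · Im(a + b + 1 - c)`. An affine function that stays positive on all of `ℝ` has zero
slope, and its value at `s = 0`, divided by `cos λ > 0`, is `Re[e^{-iλ}(ab - (a + b + 1 - c))]`. -/

namespace Complex

lemma conj_exp_ofReal_mul_I (x : ℝ) : conj (exp (x * I)) = exp (-x * I) := by
  rw [← exp_conj, map_mul, conj_ofReal, conj_I, mul_neg, neg_mul]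

lemma normSq_exp_ofReal_mul_I_mul_ofReal (x r : ℝ) : normSq (exp (x * I) * r) = r ^ 2 := by
  rw [normSq_mul, normSq_eq_norm_sq, norm_exp_ofReal_mul_I, normSq_ofReal]
  ring

lemma mul_I_sub_one_re (s : ℝ) (w : ℂ) : ((I * s - 1) * w).re = -w.re - s * w.im := by
  simp only [mul_re, sub_re, sub_im, mul_im, I_re, I_im, ofReal_re, ofReal_im, one_re, one_im]
  ring

lemma add_mul_sub_mul_conj (μ z a b c : ℂ) :
    ((μ * z + a) * (μ * z + b) - μ * z * (μ * z + c - 1)) * conj μ =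
      (normSq μ : ℂ) * (z * (a + b + 1 - c)) + a * b * conj μ := by
  rw [normSq_eq_conj_mul_self]
  ring

lemma re_exp_neg_ofReal_mul_I_mul {w : ℂ} (hw : w.im = 0) (x : ℝ) :
    (exp (-x * I) * w).re = Real.cos x * w.re := by
  rw [mul_re, ← ofReal_neg, exp_ofReal_mul_I_re, Real.cos_neg, hw, mul_zero, sub_zero]

end Complex

lemma re_add_mul_sub_mul_conj_of_eq {lam : ℝ} {μ : ℂ}
    (hμ : μ = exp (lam * I) * (Real.cos lam : ℂ)) (z a b c : ℂ) :
    (((μ * z + a) * (μ * z + b) - μ * z * (μ * z + c - 1)) * conj μ).re =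
      Real.cos lam ^ 2 * (z * (a + b + 1 - c)).re + (a * b * exp (-lam * I)).re * Real.cos lam := by
  have hconj : conj μ = exp (-lam * I) * (Real.cos lam : ℂ) := by
    rw [hμ, map_mul, conj_exp_ofReal_mul_I, conj_ofReal]
  rw [add_mul_sub_mul_conj, hconj, hμ, normSq_exp_ofReal_mul_I_mul_ofReal, ← mul_assoc (a * b),
    add_re, re_mul_ofReal, re_ofReal_mul]

lemma eq_zero_of_forall_pos_add_mul {α β : ℝ} (h : ∀ s : ℝ, 0 < α + s * β) : β = 0 := by
  by_contra hβ
  have := h (-α / β)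
  rw [div_mul_cancel₀ _ hβ] at this
  linarith

lemma im_eq_zero_and_pos_of_forall_pos {k C : ℝ} (hk : 0 < k) {w : ℂ}
    (h : ∀ s : ℝ, 0 < k ^ 2 * ((I * s - 1) * w).re + C * k) : w.im = 0 ∧ 0 < C - k * w.re := by
  simp only [mul_I_sub_one_re] at h
  have him : w.im = 0 := by
    have := eq_zero_of_forall_pos_add_mul (α := C * k - k ^ 2 * w.re) (β := -(k ^ 2 * w.im))
      fun s => by linarith [h s]
    simpa [hk.ne'] using this
  refine ⟨him, pos_of_mul_pos_right (a := k) ?_ hk.le⟩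
  linarith [h 0]

/-- The direction condition `Re[(B-A) conj μ] > 0` and its consequences. -/
theorem direction_condition (lam : ℝ) (hlam : -(π/2) < lam ∧ lam < π/2)
    (μ : ℂ) (hμ : μ = Complex.exp ((lam:ℂ) * Complex.I) * (Real.cos lam : ℂ))
    (a b c : ℂ) :
    (∀ s : ℝ,
      ((((μ * (Complex.I * s - 1) + a) * (μ * (Complex.I * s - 1) + b)) -
        (μ * (Complex.I * s - 1)) * (μ * (Complex.I * s - 1) + c - 1)) *
          (starRingEnd ℂ) μ).re =
      (Real.cos lam) ^ 2 * ((Complex.I * s - 1) * (a + b + 1 - c)).re +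
        (a * b * Complex.exp (-(lam:ℂ) * Complex.I)).re * Real.cos lam) ∧
    ((∀ s : ℝ, 0 <
      ((((μ * (Complex.I * s - 1) + a) * (μ * (Complex.I * s - 1) + b)) -
        (μ * (Complex.I * s - 1)) * (μ * (Complex.I * s - 1) + c - 1)) *
          (starRingEnd ℂ) μ).re) →
      (a + b + 1 - c).im = 0 ∧
        0 < (Complex.exp (-(lam:ℂ) * Complex.I) * (a * b - (a + b + 1 - c))).re) := by
  have hcos : 0 < Real.cos lam := cos_pos_of_mem_Ioo ⟨hlam.1, hlam.2⟩
  have expansion := fun s : ℝ => re_add_mul_sub_mul_conj_of_eq hμ (I * s - 1) a b c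
  refine ⟨expansion, fun hpos => ?_⟩
  obtain ⟨him, hre⟩ := im_eq_zero_and_pos_of_forall_pos hcos fun s => expansion s ▸ hpos s
  refine ⟨him, ?_⟩
  rwa [mul_sub, sub_re (cexp _ * _), re_exp_neg_ofReal_mul_I_mul him, mul_comm (cexp _)]
end

section
/- Let λ ∈ ℝ with 0 < |λ| < π/2 and suppose a, b ∈ ℂ are such that q = e^{-iλ} a b is a positive real number. Then with L, M, N as in the spirallikeness criterion, L = q(2 + cos 2λ), M = -q(Im[a+b] - 2 sin λ cos λ), and N = q(2 Re[a+b] - cos 2λ - q/cos λ). Consequently, if (2 + cos 2λ)(2 Re[a+b] - cos 2λ - q/cos λ) - (Im[a+b] - sin 2λ)² ≥ 0, then L ≥ 0, N ≥ 0 and LN - M² ≥ 0. -/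
open Complex Real

/-- Simplification of `L, M, N` when `q = e^{-iλ} a b` is a positive real. -/
theorem LMN_of_q_pos (lam : ℝ) (hlam0 : 0 < |lam|) (hlam : |lam| < π/2)
    (a b : ℂ) (q : ℝ) (hq : 0 < q)
    (hqab : Complex.exp (-(lam:ℂ) * Complex.I) * a * b = (q : ℂ))
    (L M N : ℝ)
    (hL : L = (Complex.exp (-(lam:ℂ) * Complex.I) * a * b *
        (2 + Complex.exp (-(2*lam:ℂ) * Complex.I))).re)
    (hM : M = (Complex.exp (-(lam:ℂ) * Complex.I) * a * b *
        ((starRingEnd ℂ) a + (starRingEnd ℂ) b -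
          2 * Complex.exp (-(lam:ℂ) * Complex.I) * (Real.cos lam : ℂ))).im)
    (hN : N = (Complex.exp (-(lam:ℂ) * Complex.I) * a * b *
        (2 * (starRingEnd ℂ) a + 2 * (starRingEnd ℂ) b -
          Complex.exp (-(2*lam:ℂ) * Complex.I) -
          Complex.exp ((lam:ℂ) * Complex.I) * (starRingEnd ℂ) a * (starRingEnd ℂ) b /
            (Real.cos lam : ℂ))).re) :
    L = q * (2 + Real.cos (2 * lam)) ∧
    M = -q * ((a + b).im - 2 * Real.sin lam * Real.cos lam) ∧
    N = q * (2 * (a + b).re - Real.cos (2 * lam) - q / Real.cos lam) ∧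
    (0 ≤ (2 + Real.cos (2 * lam)) *
          (2 * (a + b).re - Real.cos (2 * lam) - q / Real.cos lam) -
          ((a + b).im - Real.sin (2 * lam)) ^ 2 →
      0 ≤ L ∧ 0 ≤ N ∧ 0 ≤ L * N - M ^ 2) := by
  have hlt := abs_lt.mp hlam
  have hcos : 0 < Real.cos lam := Real.cos_pos_of_mem_Ioo ⟨by linarith [hlt.1], hlt.2⟩
  have hc0 : (Real.cos lam : ℂ) ≠ 0 := by exact_mod_cast hcos.ne'
  have key : ∀ x : ℝ, Complex.exp ((x:ℂ) * Complex.I)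
      = (Real.cos x : ℂ) + (Real.sin x : ℂ) * Complex.I := by
    intro x; rw [Complex.exp_mul_I]; norm_cast
  have hE : Complex.exp (-(lam:ℂ) * Complex.I)
      = (Real.cos lam : ℂ) - (Real.sin lam : ℂ) * Complex.I := by
    rw [show (-(lam:ℂ)) = ((-lam : ℝ):ℂ) by push_cast; ring, key, Real.cos_neg,
      Real.sin_neg]
    push_cast; ring
  have hE2 : Complex.exp (-(2*lam:ℂ) * Complex.I)
      = (Real.cos (2*lam) : ℂ) - (Real.sin (2*lam) : ℂ) * Complex.I := by
    rw [show (-(2*lam:ℂ)) = ((-(2*lam) : ℝ):ℂ) by push_cast; ring, key, Real.cos_neg,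
      Real.sin_neg]
    push_cast; ring
  have hE' : Complex.exp ((lam:ℂ) * Complex.I)
      = (Real.cos lam : ℂ) + (Real.sin lam : ℂ) * Complex.I := key lam
  have hconj : Complex.exp ((lam:ℂ) * Complex.I) * (starRingEnd ℂ) a * (starRingEnd ℂ) b
      = (q : ℂ) := by
    have := congrArg (starRingEnd ℂ) hqab
    simpa [← Complex.exp_conj, map_mul, Complex.conj_I, Complex.conj_ofReal] using this
  -- complex-level identities
  have id1 : Complex.exp (-(lam:ℂ) * Complex.I) * a * b *
      (2 + Complex.exp (-(2*lam:ℂ) * Complex.I))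
      = (q:ℂ) * (2 + Complex.exp (-(2*lam:ℂ) * Complex.I)) := by rw [hqab]
  have id2 : Complex.exp (-(lam:ℂ) * Complex.I) * a * b *
      ((starRingEnd ℂ) a + (starRingEnd ℂ) b -
        2 * Complex.exp (-(lam:ℂ) * Complex.I) * (Real.cos lam : ℂ))
      = (q:ℂ) * ((starRingEnd ℂ) a + (starRingEnd ℂ) b) -
        2 * (q:ℂ) * Complex.exp (-(lam:ℂ) * Complex.I) * (Real.cos lam : ℂ) := by
    linear_combination ((starRingEnd ℂ) a + (starRingEnd ℂ) b -
      2 * Complex.exp (-(lam:ℂ) * Complex.I) * (Real.cos lam : ℂ)) * hqab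
  have id3 : Complex.exp (-(lam:ℂ) * Complex.I) * a * b *
      (2 * (starRingEnd ℂ) a + 2 * (starRingEnd ℂ) b -
        Complex.exp (-(2*lam:ℂ) * Complex.I) -
        Complex.exp ((lam:ℂ) * Complex.I) * (starRingEnd ℂ) a * (starRingEnd ℂ) b /
          (Real.cos lam : ℂ))
      = (q:ℂ) * (2 * (starRingEnd ℂ) a + 2 * (starRingEnd ℂ) b) -
        (q:ℂ) * Complex.exp (-(2*lam:ℂ) * Complex.I) -
        ((q * q / Real.cos lam : ℝ) : ℂ) := by
    rw [show ((q * q / Real.cos lam : ℝ) : ℂ) = (q:ℂ) * (q:ℂ) / (Real.cos lam : ℂ) by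
      push_cast; ring]
    linear_combination (2 * (starRingEnd ℂ) a + 2 * (starRingEnd ℂ) b -
        Complex.exp (-(2*lam:ℂ) * Complex.I) -
        Complex.exp ((lam:ℂ) * Complex.I) * (starRingEnd ℂ) a * (starRingEnd ℂ) b /
          (Real.cos lam : ℂ)) * hqab - ((q:ℂ) / (Real.cos lam : ℂ)) * hconj
  have hLq : L = q * (2 + Real.cos (2 * lam)) := by
    rw [hL, id1, hE2]
    simp only [Complex.mul_re, Complex.mul_im, Complex.add_re, Complex.add_im,
      Complex.sub_re, Complex.sub_im, Complex.ofReal_re, Complex.ofReal_im,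
      Complex.I_re, Complex.I_im, Complex.re_ofNat, Complex.im_ofNat]
    ring
  have hMq : M = -q * ((a + b).im - 2 * Real.sin lam * Real.cos lam) := by
    rw [hM, id2, hE]
    simp only [Complex.mul_re, Complex.mul_im, Complex.add_re, Complex.add_im,
      Complex.sub_re, Complex.sub_im, Complex.ofReal_re, Complex.ofReal_im,
      Complex.I_re, Complex.I_im, Complex.re_ofNat, Complex.im_ofNat,
      Complex.conj_re, Complex.conj_im]
    ring
  have hNq : N = q * (2 * (a + b).re - Real.cos (2 * lam) - q / Real.cos lam) := by
    rw [hN, id3, hE2]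
    simp only [Complex.mul_re, Complex.mul_im, Complex.add_re, Complex.add_im,
      Complex.sub_re, Complex.sub_im, Complex.ofReal_re, Complex.ofReal_im,
      Complex.I_re, Complex.I_im, Complex.re_ofNat, Complex.im_ofNat,
      Complex.conj_re, Complex.conj_im]
    ring
  refine ⟨hLq, hMq, hNq, fun h => ?_⟩
  have h3 : (0:ℝ) < 2 + Real.cos (2 * lam) := by nlinarith [Real.neg_one_le_cos (2*lam)]
  have hN' : 0 ≤ 2 * (a + b).re - Real.cos (2 * lam) - q / Real.cos lam := by
    nlinarith [sq_nonneg ((a + b).im - Real.sin (2 * lam))]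
  refine ⟨by nlinarith, by nlinarith, ?_⟩
  have hs : Real.sin (2 * lam) = 2 * Real.sin lam * Real.cos lam := Real.sin_two_mul lam
  have hkey : L * N - M ^ 2 = q ^ 2 * ((2 + Real.cos (2 * lam)) *
      (2 * (a + b).re - Real.cos (2 * lam) - q / Real.cos lam) -
      ((a + b).im - Real.sin (2 * lam)) ^ 2) := by
    rw [hLq, hMq, hNq, hs]; ring
  rw [hkey]
  positivity
end
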